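/- (Characterization of regular subgroups) A subgroup U ≤ G = S_h × S_n × Ω is regular if and only if both: (a) for every (φ,ψ,id) ∈ U with ψ ≠ id and every prime π with |ψ|_π = π^a > 1, π^a does not divide gcd(T(φ)); and (b) for every (φ,ψ,ρ₀) ∈ U with ψ² = id and ψ not conjugate to ρ₀, 2 does not divide gcd(T(φ)). -/
import Mathlib


/-- A preference profile: each individual `i : Fin h` has a linear order on the `n`
alternatives, identified with the permutation of `Fin n` mapping ranks to alternatives. -/
abbrev Profile (h n : Nat) := Fin h → Equiv.Perm (Fin n)

/-- The order-reversing permutation `ρ₀`. -/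
def rho0 (n : Nat) : Equiv.Perm (Fin n) := Fin.revPerm

/-- The subgroup `Ω = {id, ρ₀}` of `S_n` (generated by `ρ₀`, which has order 2). -/
def Omega (n : Nat) : Subgroup (Equiv.Perm (Fin n)) := Subgroup.zpowers (rho0 n)

/-- `ρ₀` as an element of `Ω`. -/
def omegaRho0 (n : Nat) : Omega n := ⟨rho0 n, Subgroup.mem_zpowers _⟩

/-- The group `G = S_h × S_n × Ω`. -/
abbrev GG (h n : Nat) := Equiv.Perm (Fin h) × Equiv.Perm (Fin n) × (Omega n)

/-- The action of `(φ, ψ, ρ) ∈ G` on a profile: `(p^{(φ,ψ,ρ)})_i = ψ p_{φ⁻¹(i)} ρ`. -/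
def act {h n : Nat} (g : GG h n) (p : Profile h n) : Profile h n :=
  fun i => g.2.1 * p (g.1⁻¹ i) * (g.2.2 : Equiv.Perm (Fin n))

/-- A rule `F` is `U`-symmetric if `F(p^{(φ,ψ,ρ)}) = ψ F(p) ρ` for all `p` and `(φ,ψ,ρ) ∈ U`. -/
def USymm {h n : Nat} (U : Set (GG h n)) (F : Profile h n → Equiv.Perm (Fin n)) : Prop :=
  ∀ p : Profile h n, ∀ g ∈ U, F (act g p) = g.2.1 * F p * (g.2.2 : Equiv.Perm (Fin n))

/-- `S₁^U(p) = { q : ψ q ρ = q for all (φ,ψ,ρ) in the stabilizer of p in U }`. -/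
def S1set {h n : Nat} (U : Set (GG h n)) (p : Profile h n) : Set (Equiv.Perm (Fin n)) :=
  {q | ∀ g ∈ U, act g p = p → g.2.1 * q * (g.2.2 : Equiv.Perm (Fin n)) = q}

/-- Regularity of `U`: for every profile `p` there is `ψ*` conjugate to `ρ₀` with
`Stab_U(p) ⊆ (S_h × {id} × {id}) ∪ (S_h × {ψ*} × {ρ₀})`. -/
def Regular {h n : Nat} (U : Set (GG h n)) : Prop :=
  ∀ p : Profile h n, ∃ ψs : Equiv.Perm (Fin n), IsConj (rho0 n) ψs ∧
    ∀ g ∈ U, act g p = p →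
      (g.2.1 = 1 ∧ (g.2.2 : Equiv.Perm (Fin n)) = 1) ∨
      (g.2.1 = ψs ∧ (g.2.2 : Equiv.Perm (Fin n)) = rho0 n)

/-- Number of individuals strictly preferring `x` to `y` in profile `p`
(smaller rank = better, since permutations send ranks to alternatives). -/
def prefCount {h n : Nat} (p : Profile h n) (x y : Fin n) : Nat :=
  (Finset.univ.filter fun i => (p i)⁻¹ x < (p i)⁻¹ y).card

/-- `C_ν(p)`: linear orders consistent with the `ν`-majority principle applied to `p`. -/
def Cset {h n : Nat} (p : Profile h n) (ν : Nat) : Set (Equiv.Perm (Fin n)) :=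
  {q | ∀ x y : Fin n, ν ≤ prefCount p x y → q⁻¹ x < q⁻¹ y}

/-- `ν(p)`: the minimal majority threshold `ν ∈ ℕ ∩ (h/2, h]` with `C_ν(p) ≠ ∅`. -/
noncomputable def nuMin {h n : Nat} (p : Profile h n) : Nat :=
  sInf {ν : Nat | h < 2 * ν ∧ ν ≤ h ∧ (Cset p ν).Nonempty}

/-- minimal majority rule. -/
def MinMaj {h n : Nat} (F : Profile h n → Equiv.Perm (Fin n)) : Prop :=
  ∀ p : Profile h n, F p ∈ Cset p (nuMin p)

/-- `gcd(T(φ))`: the gcd of the lengths of the orbits (cycles) of `φ`. -/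
noncomputable def gcdOrbits {h : Nat} (phi : Equiv.Perm (Fin h)) : Nat :=
  Finset.univ.gcd fun i => Function.minimalPeriod (⇑phi) i

section Aux
open Function Equiv

lemma rho0_sq (n : Nat) : (rho0 n) ^ 2 = 1 := by
  ext i
  simp [rho0, pow_two, Equiv.Perm.mul_apply]

lemma rho0_ne_one {n : Nat} (hn : 2 ≤ n) : rho0 n ≠ 1 := by
  intro hc
  have := congrArg (fun f : Equiv.Perm (Fin n) => (f ⟨0, by omega⟩).val) hc
  simp [rho0, Fin.val_rev] at this
  omega

lemma omega_cases {n : Nat} (ρ : Omega n) :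
    (ρ : Equiv.Perm (Fin n)) = 1 ∨ (ρ : Equiv.Perm (Fin n)) = rho0 n := by
  obtain ⟨k, hk⟩ := ρ.2
  have h2 : rho0 n ^ (2:ℤ) = 1 := by
    rw [show (2:ℤ) = ((2:ℕ):ℤ) by norm_num, zpow_natCast, rho0_sq]
  rcases Int.even_or_odd k with ⟨q, hq⟩ | ⟨q, hq⟩
  · left
    rw [← hk]
    show rho0 n ^ k = 1
    rw [hq, show q + q = 2 * q by ring, zpow_mul, h2, one_zpow]
  · right
    rw [← hk]
    show rho0 n ^ k = rho0 n
    rw [hq, zpow_add, zpow_mul, h2, one_zpow, one_mul, zpow_one]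

lemma mem_periodicPts_perm {m : Nat} (φ : Equiv.Perm (Fin m)) (x : Fin m) :
    x ∈ periodicPts ⇑φ :=
  ⟨orderOf φ, orderOf_pos φ, by
    simp [IsPeriodicPt, IsFixedPt, Equiv.Perm.iterate_eq_pow, pow_orderOf_eq_one]⟩

lemma pow_apply_modEq {m : Nat} (φ : Equiv.Perm (Fin m)) (x : Fin m) {a b : ℕ}
    (hab : (φ ^ a) x = (φ ^ b) x) :
    a ≡ b [MOD Function.minimalPeriod ⇑φ x] := by
  rcases le_total a b with hle | hle
  case _ =>
    have key : (φ ^ (b - a)) ((φ ^ a) x) = (φ ^ a) x := by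
      rw [← Equiv.Perm.mul_apply, ← pow_add, Nat.sub_add_cancel hle, ← hab]
    have hper : Function.minimalPeriod ⇑φ ((φ ^ a) x) ∣ (b - a) := by
      apply Function.IsPeriodicPt.minimalPeriod_dvd
      simpa [IsPeriodicPt, IsFixedPt, Equiv.Perm.iterate_eq_pow] using key
    rw [← Equiv.Perm.iterate_eq_pow] at hper
    rw [Function.minimalPeriod_apply_iterate (mem_periodicPts_perm φ x)] at hper
    exact (Nat.modEq_iff_dvd' hle).2 hper
  case _ =>
    have key : (φ ^ (a - b)) ((φ ^ b) x) = (φ ^ b) x := by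
      rw [← Equiv.Perm.mul_apply, ← pow_add, Nat.sub_add_cancel hle, hab]
    have hper : Function.minimalPeriod ⇑φ ((φ ^ b) x) ∣ (a - b) := by
      apply Function.IsPeriodicPt.minimalPeriod_dvd
      simpa [IsPeriodicPt, IsFixedPt, Equiv.Perm.iterate_eq_pow] using key
    rw [← Equiv.Perm.iterate_eq_pow] at hper
    rw [Function.minimalPeriod_apply_iterate (mem_periodicPts_perm φ x)] at hper
    exact ((Nat.modEq_iff_dvd' hle).2 hper).symm

end Aux

section Aux2
open Function Equiv

lemma act_fix_iff {h n : Nat} (g : GG h n) (p : Profile h n) :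
    act g p = p ↔ ∀ j, g.2.1 * p j * (g.2.2 : Equiv.Perm (Fin n)) = p (g.1 j) := by
  constructor
  · intro H j
    have := congrFun H (g.1 j)
    simpa [act] using this
  · intro H
    funext i
    have := H (g.1⁻¹ i)
    simpa [act] using this

lemma stab_iterate {h n : Nat} {φ : Equiv.Perm (Fin h)} {ψ ρ : Equiv.Perm (Fin n)}
    {p : Profile h n} (H : ∀ j, ψ * p j * ρ = p (φ j)) :
    ∀ (k : ℕ) (j : Fin h), ψ ^ k * p j * ρ ^ k = p ((φ ^ k) j) := by
  intro k
  induction k with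
  | zero => intro j; simp
  | succ k ih =>
    intro j
    have e1 : ψ ^ (k+1) * p j * ρ ^ (k+1) = ψ * (ψ ^ k * p j * ρ ^ k) * ρ := by
      rw [pow_succ' ψ, pow_succ ρ]; group
    rw [e1, ih, H, ← Equiv.Perm.mul_apply, ← pow_succ']

lemma exists_stab_profile {h n : Nat} (φ : Equiv.Perm (Fin h)) (ψ ρ : Equiv.Perm (Fin n))
    (H : ∀ i, ψ ^ (Function.minimalPeriod ⇑φ i) = 1 ∧ ρ ^ (Function.minimalPeriod ⇑φ i) = 1) :
    ∃ p : Profile h n, ∀ j, ψ * p j * ρ = p (φ j) := by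
  classical
  have hne : ∀ i : Fin h, (Finset.univ.filter fun j => φ.SameCycle i j).Nonempty :=
    fun i => ⟨i, by simp [Equiv.Perm.SameCycle.refl]⟩
  set rep : Fin h → Fin h :=
    fun i => (Finset.univ.filter fun j => φ.SameCycle i j).min' (hne i) with hrepdef
  have hrep1 : ∀ i, φ.SameCycle i (rep i) := by
    intro i
    have := Finset.min'_mem _ (hne i)
    simpa using this
  have hrep2 : ∀ i, rep (φ i) = rep i := by
    intro i
    have hfe : (Finset.univ.filter fun j => φ.SameCycle (φ i) j)
        = (Finset.univ.filter fun j => φ.SameCycle i j) := by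
      apply Finset.filter_congr
      intro j _
      simp [Equiv.Perm.sameCycle_apply_left]
    simp only [hrepdef, hfe]
  have hex : ∀ i, ∃ k : ℕ, (φ ^ k) (rep i) = i := by
    intro i
    obtain ⟨k, -, -, hk⟩ := Equiv.Perm.SameCycle.exists_pow_eq φ (hrep1 i).symm
    exact ⟨k, hk⟩
  have hkk : ∀ i, (φ ^ Nat.find (hex i)) (rep i) = i := fun i => Nat.find_spec (hex i)
  refine ⟨fun i => ψ ^ Nat.find (hex i) * ρ ^ Nat.find (hex i), ?_⟩
  intro j
  have hmod : Nat.find (hex (φ j)) ≡ Nat.find (hex j) + 1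
      [MOD Function.minimalPeriod ⇑φ (rep j)] := by
    apply pow_apply_modEq
    rw [show (φ ^ Nat.find (hex (φ j))) (rep j) = φ j by
      rw [← hrep2 j]; exact hkk (φ j)]
    rw [pow_succ', Equiv.Perm.mul_apply, hkk j]
  have hψ : ψ ^ Nat.find (hex (φ j)) = ψ ^ (Nat.find (hex j) + 1) := by
    rw [pow_eq_pow_iff_modEq]
    exact Nat.ModEq.of_dvd (orderOf_dvd_of_pow_eq_one (H (rep j)).1) hmod
  have hρ : ρ ^ Nat.find (hex (φ j)) = ρ ^ (Nat.find (hex j) + 1) := by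
    rw [pow_eq_pow_iff_modEq]
    exact Nat.ModEq.of_dvd (orderOf_dvd_of_pow_eq_one (H (rep j)).2) hmod
  show ψ * (ψ ^ Nat.find (hex j) * ρ ^ Nat.find (hex j)) * ρ
      = ψ ^ Nat.find (hex (φ j)) * ρ ^ Nat.find (hex (φ j))
  rw [hψ, hρ, pow_succ' ψ, pow_succ ρ]
  group

lemma act_mul {h n : Nat} (g g' : GG h n) (p : Profile h n) :
    act (g * g') p = act g (act g' p) := by
  have hcomm : (g.2.2 : Equiv.Perm (Fin n)) * (g'.2.2 : Equiv.Perm (Fin n))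
      = (g'.2.2 : Equiv.Perm (Fin n)) * (g.2.2 : Equiv.Perm (Fin n)) := by
    rcases omega_cases g.2.2 with h1 | h1 <;> rcases omega_cases g'.2.2 with h2 | h2 <;>
      rw [h1, h2] <;> simp
  funext i
  simp only [act, Prod.fst_mul, Prod.snd_mul, Subgroup.coe_mul, mul_inv_rev,
    Equiv.Perm.mul_apply]
  rw [hcomm]
  simp [mul_assoc]

lemma act_one {h n : Nat} (p : Profile h n) : act (1 : GG h n) p = p := by
  funext i
  simp [act]

end Aux2


theorem stmt11 {h n : Nat} (hh : 2 ≤ h) (hn : 2 ≤ n) (U : Subgroup (GG h n)) :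
    Regular (U : Set (GG h n)) ↔
      ((∀ (φ : Equiv.Perm (Fin h)) (ψ : Equiv.Perm (Fin n)),
          ((φ, ψ, (1 : Omega n)) : GG h n) ∈ U → ψ ≠ 1 →
          ∀ π a : Nat, π.Prime → 1 ≤ a → (orderOf ψ).factorization π = a →
          ¬ (π ^ a ∣ gcdOrbits φ)) ∧
       (∀ (φ : Equiv.Perm (Fin h)) (ψ : Equiv.Perm (Fin n)),
          ((φ, ψ, omegaRho0 n) : GG h n) ∈ U → ψ ^ 2 = 1 → ¬ IsConj (rho0 n) ψ →
          ¬ (2 ∣ gcdOrbits φ))) := by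
  constructor
  · intro hreg
    constructor
    · -- condition (a)
      intro φ ψ hmem hψ π a hπp ha hfac hdvd
      have hN0 : orderOf ψ ≠ 0 := (orderOf_pos ψ).ne'
      have hπa_dvd_N : π ^ a ∣ orderOf ψ := by
        rw [← hfac]; exact Nat.ordProj_dvd (orderOf ψ) π
      set m := orderOf ψ / π ^ a with hmdef
      have hm_dvd : m ∣ orderOf ψ := Nat.div_dvd_of_dvd hπa_dvd_N
      have hm0 : m ≠ 0 := by
        intro hc
        apply hN0
        have hthis := Nat.div_mul_cancel hπa_dvd_N
        rw [← hmdef, hc, zero_mul] at hthis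
        exact hthis.symm
      have hπm : ¬ π ∣ m := by
        have := Nat.not_dvd_ordCompl hπp hN0
        rwa [hfac] at this
      have hord' : orderOf (ψ ^ m) = π ^ a := by
        rw [orderOf_pow, Nat.gcd_eq_right hm_dvd, hmdef,
          Nat.div_div_self hπa_dvd_N hN0]
      have hπa2 : 2 ≤ π ^ a := le_trans hπp.two_le (Nat.le_self_pow (by omega) π)
      have hψm : ψ ^ m ≠ 1 := by
        intro hc
        rw [hc, orderOf_one] at hord'
        omega
      have hcond : ∀ i, (ψ ^ m) ^ (Function.minimalPeriod ⇑(φ ^ m) i) = 1 ∧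
          (1 : Equiv.Perm (Fin n)) ^ (Function.minimalPeriod ⇑(φ ^ m) i) = 1 := by
        intro i
        refine ⟨?_, one_pow _⟩
        apply orderOf_dvd_iff_pow_eq_one.1
        rw [hord', show ⇑(φ ^ m) = (⇑φ)^[m] from (Equiv.Perm.iterate_eq_pow φ m).symm,
          Function.minimalPeriod_iterate_eq_div_gcd hm0]
        set ℓ := Function.minimalPeriod ⇑φ i with hℓdef
        have hℓdvd : π ^ a ∣ ℓ := hdvd.trans (Finset.gcd_dvd (Finset.mem_univ i))
        have hcop : Nat.Coprime (π ^ a) (Nat.gcd ℓ m) :=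
          Nat.Coprime.pow_left _ ((Nat.Prime.coprime_iff_not_dvd hπp).2
            (fun hd => hπm (hd.trans (Nat.gcd_dvd_right ℓ m))))
        have hmul : ℓ / Nat.gcd ℓ m * Nat.gcd ℓ m = ℓ :=
          Nat.div_mul_cancel (Nat.gcd_dvd_left ℓ m)
        refine hcop.dvd_of_dvd_mul_right ?_
        rw [hmul]
        exact hℓdvd
      obtain ⟨p, hp⟩ := exists_stab_profile (φ ^ m) (ψ ^ m) 1 hcond
      obtain ⟨ψs, hψs, hprop⟩ := hreg p
      have hmem' : ((φ ^ m, ψ ^ m, (1 : Omega n)) : GG h n) ∈ U := by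
        have := pow_mem hmem m
        simpa [Prod.pow_mk, one_pow] using this
      have hfix : act ((φ ^ m, ψ ^ m, (1 : Omega n)) : GG h n) p = p := by
        rw [act_fix_iff]
        intro j
        simpa using hp j
      rcases hprop _ hmem' hfix with ⟨h1, _⟩ | ⟨_, h2⟩
      · exact hψm h1
      · exact rho0_ne_one hn (by simpa using h2.symm)
    · -- condition (b)
      intro φ ψ hmem hψ2 hconj hdvd
      have hcond : ∀ i, ψ ^ (Function.minimalPeriod ⇑φ i) = 1 ∧
          (rho0 n) ^ (Function.minimalPeriod ⇑φ i) = 1 := by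
        intro i
        have h2 : 2 ∣ Function.minimalPeriod ⇑φ i :=
          hdvd.trans (Finset.gcd_dvd (Finset.mem_univ i))
        obtain ⟨c, hc⟩ := h2
        constructor <;> rw [hc, pow_mul] <;> simp [hψ2, rho0_sq]
      obtain ⟨p, hp⟩ := exists_stab_profile φ ψ (rho0 n) hcond
      obtain ⟨ψs, hψs, hprop⟩ := hreg p
      have hfix : act ((φ, ψ, omegaRho0 n) : GG h n) p = p := by
        rw [act_fix_iff]
        intro j
        exact hp j
      rcases hprop _ hmem hfix with ⟨_, h1⟩ | ⟨h2, _⟩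
      · exact rho0_ne_one hn h1
      · apply hconj
        rw [show ψ = ψs from h2]
        exact hψs
  · rintro ⟨ha, hb⟩ p
    have key1 : ∀ g ∈ U, act g p = p → (g.2.2 : Equiv.Perm (Fin n)) = 1 → g.2.1 = 1 := by
      intro g hg hfix hρ
      by_contra hψ
      have H := (act_fix_iff g p).1 hfix
      have hdvd : orderOf g.2.1 ∣ gcdOrbits g.1 := by
        apply Finset.dvd_gcd
        intro j _
        apply orderOf_dvd_of_pow_eq_one
        have hit := stab_iterate H (Function.minimalPeriod ⇑g.1 j) j
        have hfixj : (g.1 ^ Function.minimalPeriod ⇑g.1 j) j = j := by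
          rw [← Equiv.Perm.iterate_eq_pow]
          exact Function.iterate_minimalPeriod
        rw [hρ, one_pow, mul_one, hfixj] at hit
        exact mul_right_cancel (hit.trans (one_mul (p j)).symm)
      have hord1 : orderOf g.2.1 ≠ 1 := by simpa [orderOf_eq_one_iff] using hψ
      have hπp : ((orderOf g.2.1).minFac).Prime := Nat.minFac_prime hord1
      have hapos : 1 ≤ (orderOf g.2.1).factorization ((orderOf g.2.1).minFac) :=
        Nat.Prime.factorization_pos_of_dvd hπp (orderOf_pos g.2.1).ne' (Nat.minFac_dvd _)
      have hmem' : ((g.1, g.2.1, (1 : Omega n)) : GG h n) ∈ U := by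
        have he : g.2.2 = (1 : Omega n) := Subtype.ext (by simpa using hρ)
        rw [← he]
        exact hg
      exact ha g.1 g.2.1 hmem' hψ _ _ hπp hapos rfl ((Nat.ordProj_dvd _ _).trans hdvd)
    by_cases hex : ∃ g, g ∈ U ∧ act g p = p ∧ (g.2.2 : Equiv.Perm (Fin n)) = rho0 n
    · obtain ⟨g0, hg0, hfix0, hρ0⟩ := hex
      have hrr : rho0 n * rho0 n = 1 := by rw [← pow_two]; exact rho0_sq n
      have hsq : g0.2.1 ^ 2 = 1 := by
        have hmem2 : g0 * g0 ∈ U := mul_mem hg0 hg0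
        have hfix2 : act (g0 * g0) p = p := by
          rw [act_mul, hfix0, hfix0]
        have hρ2 : ((g0 * g0).2.2 : Equiv.Perm (Fin n)) = 1 := by
          simp [Prod.snd_mul, hρ0, hrr]
        have := key1 _ hmem2 hfix2 hρ2
        simpa [pow_two] using this
      have hconj : IsConj (rho0 n) g0.2.1 := by
        by_contra hc
        have hmem' : ((g0.1, g0.2.1, omegaRho0 n) : GG h n) ∈ U := by
          have he : g0.2.2 = omegaRho0 n := Subtype.ext hρ0
          rw [← he]
          exact hg0
        have hodd := hb g0.1 g0.2.1 hmem' hsq hc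
        have hexj : ∃ j : Fin h, ¬ 2 ∣ Function.minimalPeriod ⇑g0.1 j := by
          by_contra hall
          push_neg at hall
          exact hodd (Finset.dvd_gcd fun j _ => hall j)
        obtain ⟨j, hj⟩ := hexj
        have hoddℓ : Function.minimalPeriod ⇑g0.1 j % 2 = 1 := by omega
        obtain ⟨c, hc2⟩ : ∃ c, Function.minimalPeriod ⇑g0.1 j = 2 * c + 1 := by
          refine ⟨Function.minimalPeriod ⇑g0.1 j / 2, ?_⟩
          omega
        have H := (act_fix_iff g0 p).1 hfix0
        have hit := stab_iterate H (Function.minimalPeriod ⇑g0.1 j) j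
        have hfixj : (g0.1 ^ Function.minimalPeriod ⇑g0.1 j) j = j := by
          rw [← Equiv.Perm.iterate_eq_pow]
          exact Function.iterate_minimalPeriod
        rw [hfixj, hρ0, hc2] at hit
        have hψℓ : g0.2.1 ^ (2 * c + 1) = g0.2.1 := by
          rw [pow_succ, pow_mul, hsq, one_pow, one_mul]
        have hρℓ : rho0 n ^ (2 * c + 1) = rho0 n := by
          rw [pow_succ, pow_mul, rho0_sq, one_pow, one_mul]
        rw [hψℓ, hρℓ] at hit
        apply hc
        have h1 : g0.2.1 * p j = p j * (rho0 n)⁻¹ := eq_mul_inv_of_mul_eq hit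
        have h2 : (rho0 n)⁻¹ = rho0 n := (inv_eq_of_mul_eq_one_left hrr).symm
        rw [h2] at h1
        rw [isConj_iff]
        refine ⟨p j, ?_⟩
        rw [← h1, mul_assoc, mul_inv_cancel, mul_one]
      refine ⟨g0.2.1, hconj, ?_⟩
      intro g hg hfix
      rcases omega_cases g.2.2 with h1 | h1
      · exact Or.inl ⟨key1 g hg hfix h1, h1⟩
      · refine Or.inr ⟨?_, h1⟩
        have hfixinv : act g0⁻¹ p = p := by
          have := act_mul g0⁻¹ g0 p
          rw [hfix0, inv_mul_cancel, act_one] at this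
          exact this.symm
        have hmemi : g * g0⁻¹ ∈ U := mul_mem hg (inv_mem hg0)
        have hfixi : act (g * g0⁻¹) p = p := by
          rw [act_mul, hfixinv, hfix]
        have hρi : ((g * g0⁻¹).2.2 : Equiv.Perm (Fin n)) = 1 := by
          have e : ((g * g0⁻¹).2.2 : Equiv.Perm (Fin n))
              = (g.2.2 : Equiv.Perm (Fin n)) * ((g0.2.2 : Equiv.Perm (Fin n)))⁻¹ := rfl
          rw [e, h1, hρ0, mul_inv_cancel]
        have := key1 _ hmemi hfixi hρi
        have : g.2.1 * (g0.2.1)⁻¹ = 1 := this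
        exact mul_inv_eq_one.1 this
    · push_neg at hex
      refine ⟨rho0 n, IsConj.refl _, ?_⟩
      intro g hg hfix
      rcases omega_cases g.2.2 with h1 | h1
      · exact Or.inl ⟨key1 g hg hfix h1, h1⟩
      · exact absurd h1 (hex g hg hfix)
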